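/- arXiv:2101.07003 — 3 statements merged into one kernel-verified Lean document; each statement's English description precedes it below -/
import Mathlib

section
/- Let A = [[F, Bᵀ],[B, 0]] be a 2×2 block matrix with F invertible and S := B F^{-1} Bᵀ invertible. Let P = [[F, Bᵀ],[0, -X]] with X invertible. Then A P^{-1} has eigenvalue 1 with eigenspace of dimension at least the size of F, and every other eigenvalue λ of A P^{-1} is an eigenvalue of X^{-1} B F^{-1} Bᵀ. -/
/-!
With `S = B F⁻¹ Bᵀ` one has `A P⁻¹ = [[1, 0], [B F⁻¹, S X⁻¹]]`, so `A P⁻¹ - 1` has zero top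
block row: its rank is at most `m` and its kernel has dimension at least `n`. For an eigenvector
`(v₁, v₂)` with eigenvalue `λ ≠ 1` the top row gives `v₁ = λ v₁`, hence `v₁ = 0`, and `v₂` is an
eigenvector of `S X⁻¹`; then `X⁻¹ v₂` is an eigenvector of the similar matrix `X⁻¹ S`.
-/

open Matrix

namespace Matrix

variable {K : Type*} [Field K] {l m n : Type*}

theorem fromBlocks_mul_fromBlocks_inv_eq [Fintype m] [Fintype n] [DecidableEq n]
    {F : Matrix n n K} (hF : IsUnit F) (C : Matrix n m K) (B : Matrix m n K) (Y : Matrix m m K) :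
    fromBlocks F C B 0 * fromBlocks F⁻¹ (F⁻¹ * C * Y) 0 (-Y) =
      fromBlocks 1 0 (B * F⁻¹) (B * F⁻¹ * C * Y) := by
  have hFF : F * F⁻¹ = 1 := mul_nonsing_inv F ((isUnit_iff_isUnit_det F).mp hF)
  simp only [fromBlocks_multiply, Matrix.mul_zero, Matrix.zero_mul, add_zero, Matrix.mul_neg,
    neg_zero, ← Matrix.mul_assoc, hFF, Matrix.one_mul, add_neg_cancel]

theorem fromBlocks_one_zero_sub_one [DecidableEq m] [DecidableEq n] (C : Matrix m n K)
    (D : Matrix m m K) : fromBlocks (1 : Matrix n n K) 0 C D - 1 = fromBlocks 0 0 C (D - 1) := by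
  ext (i | i) (j | j) <;> simp [one_apply]

theorem rank_fromBlocks_zero_zero_le [Fintype l] [Fintype m] [Fintype n] [DecidableEq m]
    (C : Matrix m l K) (D : Matrix m n K) :
    (fromBlocks (0 : Matrix l l K) 0 C D).rank ≤ Fintype.card m := by
  have hfactor : fromBlocks (0 : Matrix l l K) 0 C D =
      fromRows (0 : Matrix l m K) (1 : Matrix m m K) * fromCols C D := by
    rw [fromRows_mul, Matrix.zero_mul, Matrix.one_mul, ← fromCols_zero,
      fromRows_fromCols_eq_fromBlocks]
  calc (fromBlocks (0 : Matrix l l K) 0 C D).rank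
      ≤ (fromCols C D).rank := hfactor ▸ rank_mul_le_right _ _
    _ ≤ Fintype.card m := rank_le_card_height _

theorem card_le_finrank_ker_toLin'_fromBlocks_zero_zero [Fintype l] [Fintype m]
    [DecidableEq l] [DecidableEq m] (C : Matrix m l K) (D : Matrix m m K) :
    Fintype.card l ≤
      Module.finrank K (LinearMap.ker (toLin' (fromBlocks (0 : Matrix l l K) 0 C D))) := by
  have hrank := rank_fromBlocks_zero_zero_le C D
  have hnullity :=
    LinearMap.finrank_range_add_finrank_ker (toLin' (fromBlocks (0 : Matrix l l K) 0 C D))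
  rw [toLin'_apply', Module.finrank_fintype_fun_eq_card, Fintype.card_sum] at hnullity
  rw [rank] at hrank
  rw [toLin'_apply']
  omega

theorem eigenvector_fromBlocks_one_zero [Fintype m] [Fintype n] [DecidableEq n]
    {C : Matrix m n K} {D : Matrix m m K} {μ : K} (hμ : μ ≠ 1) {v : n ⊕ m → K} (hv : v ≠ 0)
    (hvμ : fromBlocks 1 0 C D *ᵥ v = μ • v) :
    v ∘ Sum.inr ≠ 0 ∧ D *ᵥ (v ∘ Sum.inr) = μ • (v ∘ Sum.inr) := by
  rw [fromBlocks_mulVec, one_mulVec, zero_mulVec, add_zero] at hvμ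
  have htop : v ∘ Sum.inl = μ • (v ∘ Sum.inl) := by
    ext i
    simpa using congrFun hvμ (Sum.inl i)
  have hinl : v ∘ Sum.inl = 0 := by
    have : (1 - μ) • (v ∘ Sum.inl) = 0 := by rw [sub_smul, one_smul, ← htop, sub_self]
    exact (smul_eq_zero.mp this).resolve_left (sub_ne_zero.mpr hμ.symm)
  have hbot : C *ᵥ (v ∘ Sum.inl) + D *ᵥ (v ∘ Sum.inr) = μ • (v ∘ Sum.inr) := by
    ext i
    simpa using congrFun hvμ (Sum.inr i)
  refine ⟨fun hinr => hv ?_, by rwa [hinl, mulVec_zero, zero_add] at hbot⟩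
  ext (i | i)
  · exact congrFun hinl i
  · exact congrFun hinr i

theorem exists_eigenvector_mul_comm [Fintype m] [DecidableEq m] {M N : Matrix m m K}
    (hN : IsUnit N) {μ : K} {w : m → K} (hw : w ≠ 0) (hwμ : (M * N) *ᵥ w = μ • w) :
    ∃ u : m → K, u ≠ 0 ∧ (N * M) *ᵥ u = μ • u :=
  ⟨N *ᵥ w, fun h => hw (mulVec_injective_iff_isUnit.mpr hN (h.trans (mulVec_zero N).symm)),
    by rw [mulVec_mulVec, Matrix.mul_assoc, ← mulVec_mulVec, hwμ, mulVec_smul]⟩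

end Matrix

theorem stmt1_general (n m : ℕ)
    (F : Matrix (Fin n) (Fin n) ℝ) (B : Matrix (Fin m) (Fin n) ℝ)
    (X : Matrix (Fin m) (Fin m) ℝ)
    (hF : IsUnit F) (hX : IsUnit X) :
    let A : Matrix (Fin n ⊕ Fin m) (Fin n ⊕ Fin m) ℝ := Matrix.fromBlocks F Bᵀ B 0
    let Pinv : Matrix (Fin n ⊕ Fin m) (Fin n ⊕ Fin m) ℝ :=
      Matrix.fromBlocks F⁻¹ (F⁻¹ * Bᵀ * X⁻¹) 0 (-X⁻¹)
    (n ≤ Module.finrank ℝ (LinearMap.ker (Matrix.toLin' (A * Pinv - 1)))) ∧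
    (∀ l : ℝ, l ≠ 1 → (∃ v : Fin n ⊕ Fin m → ℝ, v ≠ 0 ∧ (A * Pinv) *ᵥ v = l • v) →
      ∃ w : Fin m → ℝ, w ≠ 0 ∧ (X⁻¹ * B * F⁻¹ * Bᵀ) *ᵥ w = l • w) := by
  intro A Pinv
  have hAP : A * Pinv = fromBlocks 1 0 (B * F⁻¹) (B * F⁻¹ * Bᵀ * X⁻¹) :=
    fromBlocks_mul_fromBlocks_inv_eq hF Bᵀ B X⁻¹
  constructor
  · rw [hAP, fromBlocks_one_zero_sub_one]
    simpa using card_le_finrank_ker_toLin'_fromBlocks_zero_zero (B * F⁻¹) (B * F⁻¹ * Bᵀ * X⁻¹ - 1)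
  · rintro l hl ⟨v, hv, hvl⟩
    rw [hAP] at hvl
    obtain ⟨hw, hwl⟩ := eigenvector_fromBlocks_one_zero hl hv hvl
    simpa only [Matrix.mul_assoc] using
      exists_eigenvector_mul_comm (isUnit_nonsing_inv_iff.mpr hX) hw hwl

/-- For the saddle-point matrix `A = [[F, Bᵀ],[B, 0]]` and the block upper triangular
preconditioner `P = [[F, Bᵀ],[0, -X]]`, the preconditioned matrix `A P⁻¹` has eigenvalue 1
with eigenspace of dimension at least `n`, and every other eigenvalue of `A P⁻¹` is an
eigenvalue of `X⁻¹ B F⁻¹ Bᵀ`. -/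
theorem stmt1 (n m : ℕ)
    (F : Matrix (Fin n) (Fin n) ℝ) (B : Matrix (Fin m) (Fin n) ℝ)
    (X : Matrix (Fin m) (Fin m) ℝ)
    (hF : IsUnit F) (hS : IsUnit (B * F⁻¹ * Bᵀ)) (hX : IsUnit X) :
    let A : Matrix (Fin n ⊕ Fin m) (Fin n ⊕ Fin m) ℝ := Matrix.fromBlocks F Bᵀ B 0
    let Pinv : Matrix (Fin n ⊕ Fin m) (Fin n ⊕ Fin m) ℝ :=
      Matrix.fromBlocks F⁻¹ (F⁻¹ * Bᵀ * X⁻¹) 0 (-X⁻¹)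
    (n ≤ Module.finrank ℝ (LinearMap.ker (Matrix.toLin' (A * Pinv - 1)))) ∧
    (∀ l : ℝ, l ≠ 1 → (∃ v : Fin n ⊕ Fin m → ℝ, v ≠ 0 ∧ (A * Pinv) *ᵥ v = l • v) →
      ∃ w : Fin m → ℝ, w ≠ 0 ∧ (X⁻¹ * B * F⁻¹ * Bᵀ) *ᵥ w = l • w) :=
  stmt1_general n m F B X hF hX
end

section
/- Under the exact commutation assumption (M_u^{-1} Bᵀ)(M_p^{-1} F_{p,j}) = (M_u^{-1} F_{u,j})(M_u^{-1} Bᵀ) for all j = 1,...,N, the blocks of the space-time pressure Schur complement factor exactly: for all 1 ≤ j ≤ k ≤ N, B F_{u,k}^{-1} (∏_{i=j}^{k-1} (M_u/Δt) F_{u,i}^{-1}) Bᵀ = B M_u^{-1} Bᵀ F_{p,k}^{-1} (∏_{i=j}^{k-1} (M_p/Δt) F_{p,i}^{-1}) M_p, where products with empty index range are the identity. -/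
open Matrix

/-!
The commutation hypothesis says that `Mu⁻¹ Bᵀ` intertwines `Mp⁻¹ F_{p,i}` with `Mu⁻¹ F_{u,i}`;
inverting both sides gives `F_{u,i}⁻¹ Bᵀ = Mu⁻¹ Bᵀ F_{p,i}⁻¹ Mp`, i.e. `Bᵀ` intertwines each factor
`(Mu/Δt) F_{u,i}⁻¹` with `(1/Δt) F_{p,i}⁻¹ Mp`. Pushing `Bᵀ` through the whole velocity product this
way, then through `F_{u,k}⁻¹`, and finally moving the trailing `Mp` back to the right end of the
pressure product, yields the factorisation.
-/

namespace Matrix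

variable {R : Type*} {m n : Type*} [Fintype m] [Fintype n] [DecidableEq m] [DecidableEq n]

theorem list_prod_map_mul_eq_mul_list_prod_map [Semiring R] {ι : Type*} {f : ι → Matrix m m R}
    {g : ι → Matrix n n R} {C : Matrix m n R} :
    ∀ l : List ι, (∀ i ∈ l, f i * C = C * g i) → (l.map f).prod * C = C * (l.map g).prod
  | [], _ => by simp
  | a :: l, h => by
    rw [List.map_cons, List.prod_cons, Matrix.mul_assoc,
      list_prod_map_mul_eq_mul_list_prod_map l fun i hi => h i (List.mem_cons_of_mem a hi),
      ← Matrix.mul_assoc, h a List.mem_cons_self, List.map_cons, List.prod_cons, Matrix.mul_assoc]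

theorem nonsing_inv_mul_eq_mul_nonsing_inv_of_mul_eq_mul [CommRing R] {A : Matrix n n R}
    {A' : Matrix m m R} {X : Matrix m n R} (hA : IsUnit A.det) (hA' : IsUnit A'.det)
    (h : X * A = A' * X) : A'⁻¹ * X = X * A⁻¹ := by
  calc A'⁻¹ * X = A'⁻¹ * (A' * X) * A⁻¹ := by
        rw [← h, Matrix.mul_assoc, Matrix.mul_nonsing_inv_cancel_right _ _ hA]
    _ = X * A⁻¹ := by rw [Matrix.nonsing_inv_mul_cancel_left _ _ hA']

end Matrix

section Intertwining

variable {R : Type*} {m n : Type*} [Fintype m] [Fintype n] [DecidableEq m] [DecidableEq n]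
  [CommRing R] {Mu Fu : Matrix n n R} {Mp Fp : Matrix m m R} {C : Matrix n m R}

theorem nonsing_inv_mul_eq_of_intertwines (hMu : IsUnit Mu) (hMp : IsUnit Mp) (hFu : IsUnit Fu)
    (hFp : IsUnit Fp) (hcomm : (Mu⁻¹ * C) * (Mp⁻¹ * Fp) = (Mu⁻¹ * Fu) * (Mu⁻¹ * C)) :
    Fu⁻¹ * C = Mu⁻¹ * C * (Fp⁻¹ * Mp) := by
  rw [isUnit_iff_isUnit_det] at hMu hMp hFu hFp
  have hinv := nonsing_inv_mul_eq_mul_nonsing_inv_of_mul_eq_mul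
    (by rw [det_mul]; exact (isUnit_nonsing_inv_det _ hMp).mul hFp)
    (by rw [det_mul]; exact (isUnit_nonsing_inv_det _ hMu).mul hFu) hcomm
  rwa [Matrix.mul_inv_rev, Matrix.mul_inv_rev, nonsing_inv_nonsing_inv _ hMp,
    nonsing_inv_nonsing_inv _ hMu, Matrix.mul_assoc, mul_nonsing_inv_cancel_left _ _ hMu] at hinv

theorem smul_mul_nonsing_inv_mul_eq_of_intertwines (c : R) (hMu : IsUnit Mu) (hMp : IsUnit Mp)
    (hFu : IsUnit Fu) (hFp : IsUnit Fp)
    (hcomm : (Mu⁻¹ * C) * (Mp⁻¹ * Fp) = (Mu⁻¹ * Fu) * (Mu⁻¹ * C)) :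
    (c • Mu) * Fu⁻¹ * C = C * (c • (Fp⁻¹ * Mp)) := by
  rw [Matrix.mul_assoc, nonsing_inv_mul_eq_of_intertwines hMu hMp hFu hFp hcomm, Matrix.smul_mul,
    Matrix.mul_smul, Matrix.mul_assoc,
    mul_nonsing_inv_cancel_left _ _ ((isUnit_iff_isUnit_det Mu).mp hMu)]

end Intertwining

theorem stmt4_general (n m N : ℕ) (Δt : ℝ)
    (Mu : Matrix (Fin n) (Fin n) ℝ) (Mp : Matrix (Fin m) (Fin m) ℝ)
    (B : Matrix (Fin m) (Fin n) ℝ)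
    (Fu : ℕ → Matrix (Fin n) (Fin n) ℝ) (Fp : ℕ → Matrix (Fin m) (Fin m) ℝ)
    (hMu : IsUnit Mu) (hMp : IsUnit Mp)
    (hFu : ∀ i, 1 ≤ i → i ≤ N → IsUnit (Fu i))
    (hFp : ∀ i, 1 ≤ i → i ≤ N → IsUnit (Fp i))
    (hcomm : ∀ i, 1 ≤ i → i ≤ N →
      (Mu⁻¹ * Bᵀ) * (Mp⁻¹ * Fp i) = (Mu⁻¹ * Fu i) * (Mu⁻¹ * Bᵀ)) :
    ∀ j k, 1 ≤ j → j ≤ k → k ≤ N →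
      B * (Fu k)⁻¹ *
        (((List.range (k - j)).map (fun i => (Δt⁻¹ • Mu) * (Fu (k - 1 - i))⁻¹)).prod) * Bᵀ
      = B * Mu⁻¹ * Bᵀ * (Fp k)⁻¹ *
        (((List.range (k - j)).map (fun i => (Δt⁻¹ • Mp) * (Fp (k - 1 - i))⁻¹)).prod) * Mp := by
  intro j k hj hjk hkN
  set Q := ((List.range (k - j)).map fun i => Δt⁻¹ • ((Fp (k - 1 - i))⁻¹ * Mp)).prod
  have hvel : ((List.range (k - j)).map fun i => (Δt⁻¹ • Mu) * (Fu (k - 1 - i))⁻¹).prod * Bᵀ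
      = Bᵀ * Q := by
    refine list_prod_map_mul_eq_mul_list_prod_map _ fun i hi => ?_
    obtain ⟨hi₁, hiN⟩ : 1 ≤ k - 1 - i ∧ k - 1 - i ≤ N := by rw [List.mem_range] at hi; omega
    exact smul_mul_nonsing_inv_mul_eq_of_intertwines _ hMu hMp (hFu _ hi₁ hiN) (hFp _ hi₁ hiN)
      (hcomm _ hi₁ hiN)
  have hpres : ((List.range (k - j)).map fun i => (Δt⁻¹ • Mp) * (Fp (k - 1 - i))⁻¹).prod * Mp
      = Mp * Q :=
    list_prod_map_mul_eq_mul_list_prod_map _ fun i _ => by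
      simp only [Matrix.smul_mul, Matrix.mul_smul, Matrix.mul_assoc]
  have hk : 1 ≤ k := hj.trans hjk
  simp only [Matrix.mul_assoc] at hvel hpres ⊢
  rw [hvel, ← Matrix.mul_assoc (Fu k)⁻¹,
    nonsing_inv_mul_eq_of_intertwines hMu hMp (hFu k hk hkN) (hFp k hk hkN) (hcomm k hk hkN), hpres]
  simp only [Matrix.mul_assoc]

/-- Under the exact commutation assumption, the blocks of the space-time pressure Schur
complement factor exactly: for `1 ≤ j ≤ k ≤ N`,
`B F_{u,k}⁻¹ (∏_{i=j}^{k-1} (Mu/Δt) F_{u,i}⁻¹) Bᵀ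
  = B Mu⁻¹ Bᵀ F_{p,k}⁻¹ (∏_{i=j}^{k-1} (Mp/Δt) F_{p,i}⁻¹) Mp`,
where products expand to the right, from index `k-1` down to `j`, and equal the identity
when the range is empty. -/
theorem stmt4 (n m N : ℕ) (Δt : ℝ) (hΔt : 0 < Δt)
    (Mu : Matrix (Fin n) (Fin n) ℝ) (Mp : Matrix (Fin m) (Fin m) ℝ)
    (B : Matrix (Fin m) (Fin n) ℝ)
    (Fu : ℕ → Matrix (Fin n) (Fin n) ℝ) (Fp : ℕ → Matrix (Fin m) (Fin m) ℝ)
    (hMu : IsUnit Mu) (hMp : IsUnit Mp)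
    (hFu : ∀ i, 1 ≤ i → i ≤ N → IsUnit (Fu i))
    (hFp : ∀ i, 1 ≤ i → i ≤ N → IsUnit (Fp i))
    (hcomm : ∀ i, 1 ≤ i → i ≤ N →
      (Mu⁻¹ * Bᵀ) * (Mp⁻¹ * Fp i) = (Mu⁻¹ * Fu i) * (Mu⁻¹ * Bᵀ)) :
    ∀ j k, 1 ≤ j → j ≤ k → k ≤ N →
      B * (Fu k)⁻¹ *
        (((List.range (k - j)).map (fun i => (Δt⁻¹ • Mu) * (Fu (k - 1 - i))⁻¹)).prod) * Bᵀ
      = B * Mu⁻¹ * Bᵀ * (Fp k)⁻¹ *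
        (((List.range (k - j)).map (fun i => (Δt⁻¹ • Mp) * (Fp (k - 1 - i))⁻¹)).prod) * Mp :=
  stmt4_general n m N Δt Mu Mp B Fu Fp hMu hMp hFu hFp hcomm
end

section
/- Let F_u and F_p be N×N block lower bidiagonal matrices with diagonal blocks F_{u,k}, F_{p,k} and subdiagonal blocks -M_u/Δt, -M_p/Δt respectively, all invertible on the diagonal. If the exact commutation relation Bᵀ M_p^{-1} F_{p,k} = F_{u,k} M_u^{-1} Bᵀ holds for every k and additionally Bᵀ M_p^{-1} M_p = M_u M_u^{-1} Bᵀ trivially gives Bᵀ = Bᵀ, then with block-diagonal extensions B = diag_N(B), M_u = diag_N(M_u), M_p = diag_N(M_p), the identity B F_u^{-1} Bᵀ = B M_u^{-1} Bᵀ F_p^{-1} M_p holds (where inverses denote block matrix inverses and all are invertible). -/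
/-!
The block-diagonal extension `diag_N(X)` is the Kronecker product `1 ⊗ₖ X`, and multiplying a
block matrix by `1 ⊗ₖ X` on the left (or right) multiplies every block by `X`. So the blockwise
relations `Bᵀ Mp⁻¹ F_{p,k} = F_{u,k} Mu⁻¹ Bᵀ` on the diagonal and `Bᵀ Mp⁻¹ Mp = Mu Mu⁻¹ Bᵀ` on
the subdiagonal assemble into `Bᵀ Mp⁻¹ F_p = F_u Mu⁻¹ Bᵀ` for the space-time matrices, which
rearranges to `F_u⁻¹ Bᵀ = Mu⁻¹ Bᵀ F_p⁻¹ Mp`. Invertibility of `F_u` and `F_p` holds because they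
are block lower triangular with invertible diagonal blocks.
-/

open Matrix
open scoped Kronecker

namespace Matrix

variable {ι κ m n o R : Type*}

def blockMatrix (f : ι → κ → Matrix m n R) : Matrix (ι × m) (κ × n) R :=
  of fun p q => f p.1 q.1 p.2 q.2

theorem one_kronecker_eq_ite [MulZeroOneClass R] [DecidableEq ι] (X : Matrix m n R) :
    (1 : Matrix ι ι R) ⊗ₖ X = of fun p q => if p.1 = q.1 then X p.2 q.2 else 0 := by
  ext p q
  simp [one_apply]

section Semiring

variable [Semiring R]

theorem one_kronecker_mul_blockMatrix [Fintype ι] [DecidableEq ι] [Fintype n] (X : Matrix m n R)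
    (f : ι → κ → Matrix n o R) :
    (1 : Matrix ι ι R) ⊗ₖ X * blockMatrix f = blockMatrix fun i j => X * f i j := by
  ext ⟨i, a⟩ ⟨j, b⟩
  simp [blockMatrix, mul_apply, one_apply, Fintype.sum_prod_type, ite_mul]

theorem blockMatrix_mul_one_kronecker [Fintype κ] [DecidableEq κ] [Fintype n]
    (f : ι → κ → Matrix m n R) (Y : Matrix n o R) :
    blockMatrix f * (1 : Matrix κ κ R) ⊗ₖ Y = blockMatrix fun i j => f i j * Y := by
  ext ⟨i, a⟩ ⟨j, b⟩
  simp [blockMatrix, mul_apply, one_apply, Fintype.sum_prod_type, mul_ite]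

theorem one_kronecker_mul_blockMatrix_eq [Fintype ι] [DecidableEq ι] [Fintype κ]
    [DecidableEq κ] [Fintype m] [Fintype n] {X Y : Matrix n m R}
    {f : ι → κ → Matrix n n R} {g : ι → κ → Matrix m m R}
    (h : ∀ i j, X * g i j = f i j * Y) :
    (1 : Matrix ι ι R) ⊗ₖ X * blockMatrix g = blockMatrix f * (1 : Matrix κ κ R) ⊗ₖ Y := by
  rw [one_kronecker_mul_blockMatrix, blockMatrix_mul_one_kronecker]
  exact congrArg blockMatrix (funext₂ h)

end Semiring

theorem isUnit_blockMatrix_of_lowerTriangular [CommRing R] [Fintype ι] [LinearOrder ι]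
    [Fintype m] [DecidableEq m] {f : ι → ι → Matrix m m R} (hf : ∀ i j, i < j → f i j = 0)
    (hdiag : ∀ i, IsUnit (f i i)) : IsUnit (blockMatrix f) := by
  have htri : (blockMatrix f).BlockTriangular fun p => OrderDual.toDual p.1 :=
    fun p q hpq => by simp [blockMatrix, hf p.1 q.1 hpq]
  rw [isUnit_iff_isUnit_det, htri.det_fintype, IsUnit.prod_univ_iff]
  intro k
  let e : m ≃ {p : ι × m // OrderDual.toDual p.1 = k} :=
    { toFun := fun a => ⟨(OrderDual.ofDual k, a), rfl⟩
      invFun := fun p => p.1.2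
      left_inv := fun _ => rfl
      right_inv := fun ⟨⟨_, _⟩, h⟩ => by subst h; rfl }
  rw [← det_submatrix_equiv_self e]
  exact (isUnit_iff_isUnit_det _).mp (hdiag (OrderDual.ofDual k))

theorem inv_mul_eq_of_mul_inv_mul_eq [CommRing R] [Fintype m] [DecidableEq m] [Fintype n]
    [DecidableEq n] {A U : Matrix n n R} {P V : Matrix m m R} {X : Matrix n m R}
    (hA : IsUnit A) (hP : IsUnit P) (hV : IsUnit V) (h : X * V⁻¹ * P = A * U⁻¹ * X) :
    A⁻¹ * X = U⁻¹ * X * P⁻¹ * V := by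
  rw [isUnit_iff_isUnit_det] at hA hP hV
  calc A⁻¹ * X = A⁻¹ * (X * V⁻¹ * P * P⁻¹ * V) := by
        rw [mul_nonsing_inv_cancel_right P _ hP, nonsing_inv_mul_cancel_right V _ hV]
    _ = U⁻¹ * X * P⁻¹ * V := by
        rw [h]
        simp only [Matrix.mul_assoc, nonsing_inv_mul_cancel_left A _ hA]

section Bidiagonal

variable {N : ℕ}

def blockBidiagonal [Zero R] (D : Fin N → Matrix m m R) (C : Matrix m m R) (i j : Fin N) :
    Matrix m m R :=
  if i = j then D i else if (i : ℕ) = j + 1 then C else 0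

theorem blockMatrix_blockBidiagonal [Zero R] (D : Fin N → Matrix m m R) (C : Matrix m m R) :
    blockMatrix (blockBidiagonal D C) = of fun p q =>
      if p.1 = q.1 then D p.1 p.2 q.2 else if (p.1 : ℕ) = q.1 + 1 then C p.2 q.2 else 0 := by
  ext p q
  simp only [blockMatrix, blockBidiagonal, of_apply]
  split_ifs <;> rfl

theorem blockBidiagonal_eq_zero_of_lt [Zero R] (D : Fin N → Matrix m m R) (C : Matrix m m R)
    {i j : Fin N} (hij : i < j) : blockBidiagonal D C i j = 0 := by
  have : (i : ℕ) < j := hij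
  rw [blockBidiagonal, if_neg hij.ne, if_neg (by omega)]

theorem isUnit_blockMatrix_blockBidiagonal [CommRing R] [Fintype m] [DecidableEq m]
    {D : Fin N → Matrix m m R} (C : Matrix m m R) (hD : ∀ k, IsUnit (D k)) :
    IsUnit (blockMatrix (blockBidiagonal D C)) :=
  isUnit_blockMatrix_of_lowerTriangular (fun _ _ => blockBidiagonal_eq_zero_of_lt D C)
    fun k => by simpa [blockBidiagonal] using hD k

theorem mul_blockBidiagonal_eq [Semiring R] [Fintype m] [Fintype n] {X Y : Matrix n m R}
    {D : Fin N → Matrix m m R} {C : Matrix m m R} {D' : Fin N → Matrix n n R}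
    {C' : Matrix n n R} (hD : ∀ k, X * D k = D' k * Y) (hC : X * C = C' * Y) (i j : Fin N) :
    X * blockBidiagonal D C i j = blockBidiagonal D' C' i j * Y := by
  unfold blockBidiagonal
  split_ifs with hij
  · subst hij; exact hD i
  · exact hC
  · rw [Matrix.mul_zero, Matrix.zero_mul]

end Bidiagonal

end Matrix

theorem stmt5_general (n m N : ℕ) (Δt : ℝ)
    (Mu : Matrix (Fin n) (Fin n) ℝ) (Mp : Matrix (Fin m) (Fin m) ℝ)
    (B : Matrix (Fin m) (Fin n) ℝ)
    (Fu : Fin N → Matrix (Fin n) (Fin n) ℝ) (Fp : Fin N → Matrix (Fin m) (Fin m) ℝ)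
    (hMu : IsUnit Mu) (hMp : IsUnit Mp)
    (hFu : ∀ k, IsUnit (Fu k)) (hFp : ∀ k, IsUnit (Fp k))
    (hcomm : ∀ k, Bᵀ * Mp⁻¹ * Fp k = Fu k * Mu⁻¹ * Bᵀ) :
    let bigFu : Matrix (Fin N × Fin n) (Fin N × Fin n) ℝ := fun p q =>
      if p.1 = q.1 then Fu p.1 p.2 q.2
      else if (p.1 : ℕ) = (q.1 : ℕ) + 1 then (-(Δt⁻¹ • Mu)) p.2 q.2 else 0
    let bigFp : Matrix (Fin N × Fin m) (Fin N × Fin m) ℝ := fun p q =>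
      if p.1 = q.1 then Fp p.1 p.2 q.2
      else if (p.1 : ℕ) = (q.1 : ℕ) + 1 then (-(Δt⁻¹ • Mp)) p.2 q.2 else 0
    let bigB : Matrix (Fin N × Fin m) (Fin N × Fin n) ℝ := fun p q =>
      if p.1 = q.1 then B p.2 q.2 else 0
    let bigMu : Matrix (Fin N × Fin n) (Fin N × Fin n) ℝ := fun p q =>
      if p.1 = q.1 then Mu p.2 q.2 else 0
    let bigMp : Matrix (Fin N × Fin m) (Fin N × Fin m) ℝ := fun p q =>
      if p.1 = q.1 then Mp p.2 q.2 else 0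
    IsUnit bigFu ∧ IsUnit bigFp ∧
      bigB * bigFu⁻¹ * bigBᵀ = bigB * bigMu⁻¹ * bigBᵀ * bigFp⁻¹ * bigMp := by
  intro bigFu bigFp bigB bigMu bigMp
  have hFuST : bigFu = blockMatrix (blockBidiagonal Fu (-(Δt⁻¹ • Mu))) :=
    (blockMatrix_blockBidiagonal _ _).symm
  have hFpST : bigFp = blockMatrix (blockBidiagonal Fp (-(Δt⁻¹ • Mp))) :=
    (blockMatrix_blockBidiagonal _ _).symm
  have hBST : bigB = 1 ⊗ₖ B := (one_kronecker_eq_ite B).symm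
  have hMuST : bigMu = 1 ⊗ₖ Mu := (one_kronecker_eq_ite Mu).symm
  have hMpST : bigMp = 1 ⊗ₖ Mp := (one_kronecker_eq_ite Mp).symm
  have hFuU : IsUnit bigFu := hFuST ▸ isUnit_blockMatrix_blockBidiagonal _ hFu
  have hFpU : IsUnit bigFp := hFpST ▸ isUnit_blockMatrix_blockBidiagonal _ hFp
  have hMpU : IsUnit bigMp := hMpST ▸ isUnit_one.kronecker hMp
  have hcommST : bigBᵀ * bigMp⁻¹ * bigFp = bigFu * bigMu⁻¹ * bigBᵀ := by
    rw [hFuST, hFpST, hBST, hMuST, hMpST, ← kroneckerMap_transpose, transpose_one,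
      inv_kronecker, inv_kronecker, inv_one, ← mul_kronecker_mul, Matrix.one_mul,
      Matrix.mul_assoc, ← mul_kronecker_mul, Matrix.one_mul]
    refine one_kronecker_mul_blockMatrix_eq
      (mul_blockBidiagonal_eq (fun k => (hcomm k).trans (Matrix.mul_assoc _ _ _)) ?_)
    rw [isUnit_iff_isUnit_det] at hMu hMp
    simp only [Matrix.mul_neg, Matrix.neg_mul, Matrix.mul_smul, Matrix.smul_mul,
      nonsing_inv_mul_cancel_right Mp _ hMp, mul_nonsing_inv_cancel_left Mu _ hMu]
  refine ⟨hFuU, hFpU, ?_⟩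
  rw [Matrix.mul_assoc bigB, inv_mul_eq_of_mul_inv_mul_eq hFuU hFpU hMpU hcommST]
  simp only [Matrix.mul_assoc]

/-- With block lower bidiagonal space-time matrices `F_u`, `F_p` (diagonal blocks
`F_{u,k}`, `F_{p,k}`, subdiagonal blocks `-Mu/Δt`, `-Mp/Δt`, all diagonal blocks
invertible) and the exact commutation relation `Bᵀ Mp⁻¹ F_{p,k} = F_{u,k} Mu⁻¹ Bᵀ` for
every `k`, the block-diagonal extensions satisfy
`B F_u⁻¹ Bᵀ = B Mu⁻¹ Bᵀ F_p⁻¹ Mp`, all the space-time matrices being invertible. -/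
theorem stmt5 (n m N : ℕ) (Δt : ℝ) (hΔt : 0 < Δt)
    (Mu : Matrix (Fin n) (Fin n) ℝ) (Mp : Matrix (Fin m) (Fin m) ℝ)
    (B : Matrix (Fin m) (Fin n) ℝ)
    (Fu : Fin N → Matrix (Fin n) (Fin n) ℝ) (Fp : Fin N → Matrix (Fin m) (Fin m) ℝ)
    (hMu : IsUnit Mu) (hMp : IsUnit Mp)
    (hFu : ∀ k, IsUnit (Fu k)) (hFp : ∀ k, IsUnit (Fp k))
    (hcomm : ∀ k, Bᵀ * Mp⁻¹ * Fp k = Fu k * Mu⁻¹ * Bᵀ) :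
    let bigFu : Matrix (Fin N × Fin n) (Fin N × Fin n) ℝ := fun p q =>
      if p.1 = q.1 then Fu p.1 p.2 q.2
      else if (p.1 : ℕ) = (q.1 : ℕ) + 1 then (-(Δt⁻¹ • Mu)) p.2 q.2 else 0
    let bigFp : Matrix (Fin N × Fin m) (Fin N × Fin m) ℝ := fun p q =>
      if p.1 = q.1 then Fp p.1 p.2 q.2
      else if (p.1 : ℕ) = (q.1 : ℕ) + 1 then (-(Δt⁻¹ • Mp)) p.2 q.2 else 0
    let bigB : Matrix (Fin N × Fin m) (Fin N × Fin n) ℝ := fun p q =>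
      if p.1 = q.1 then B p.2 q.2 else 0
    let bigMu : Matrix (Fin N × Fin n) (Fin N × Fin n) ℝ := fun p q =>
      if p.1 = q.1 then Mu p.2 q.2 else 0
    let bigMp : Matrix (Fin N × Fin m) (Fin N × Fin m) ℝ := fun p q =>
      if p.1 = q.1 then Mp p.2 q.2 else 0
    IsUnit bigFu ∧ IsUnit bigFp ∧
      bigB * bigFu⁻¹ * bigBᵀ = bigB * bigMu⁻¹ * bigBᵀ * bigFp⁻¹ * bigMp :=
  stmt5_general n m N Δt Mu Mp B Fu Fp hMu hMp hFu hFp hcomm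
end
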